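/- Let [e_1,...,e_r] be a del Pezzo Wahl chain of degree ℓ ≥ 5. If the marking is of type (II), then the central mark e_i satisfies e_i ≥ 5. If the marking is of type (I) and the marking data is not [0,2̲] (degree 5), then the central mark is ≥ 3. -/

import Mathlib

/-!
Blowing down lowers the length of a chain by one and its sum by at most three, so a zero
continued fraction of length `k` has entry sum at most `3k - 4`. A Wahl chain of length `r` has
entry sum exactly `3r + 1`: the chain of `(n, a)` is `[4]` for `(2, 1)`, and otherwise comes from
the chain of `(n - a, a)` by `[e₁,…,e_r] ↦ [e₁+1,…,e_r,2]` when `2a < n`, or from that of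
`(a, 2a - n)` by `[e₁,…,e_r] ↦ [2,e₁,…,e_r+1]` when `2a > n`. This is checked on the matrix
products `∏ !![e_i, -1; 1, 0]`, together with uniqueness of HJ expansions. Comparing sums, the
central mark is at least `10 - λ₁ - λ₂` in type (II) and at least `7 - λ` in type (I).
-/

/-- The value of a Hirzebruch–Jung continued fraction `[e₁,…,e_r]`,
computed as `e₁ - 1/[e₂,…,e_r]` with `[e_r] = e_r`. -/
def hjVal : List ℤ → ℚ
  | [] => 0
  | [x] => (x : ℚ)
  | x :: y :: xs => (x : ℚ) - (hjVal (y :: xs))⁻¹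

/-- `IsHJ m q L` : `L` is the HJ continued fraction expansion of `m/q`
(all entries at least 2 and value `m/q`). -/
def IsHJ (m q : ℤ) (L : List ℤ) : Prop :=
  (∀ e ∈ L, 2 ≤ e) ∧ hjVal L = (m : ℚ) / (q : ℚ)

/-- `IsWahlChain n a L` : `L` is the Wahl chain of `n²/(na-1)` for coprime `0 < a < n`. -/
def IsWahlChain (n a : ℤ) (L : List ℤ) : Prop :=
  0 < a ∧ a < n ∧ Int.gcd n a = 1 ∧ IsHJ (n ^ 2) (n * a - 1) L

/-- One blow-down move on a chain: `[…,u,1,v,…] ↦ […,u-1,v-1,…]`,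
including the boundary cases `[1,v,…] ↦ [v-1,…]` and `[…,u,1] ↦ […,u-1]`. -/
inductive BDStep : List ℤ → List ℤ → Prop
  | mid (l r : List ℤ) (u v : ℤ) :
      BDStep (l ++ u :: 1 :: v :: r) (l ++ (u - 1) :: (v - 1) :: r)
  | left (r : List ℤ) (v : ℤ) : BDStep (1 :: v :: r) ((v - 1) :: r)
  | right (l : List ℤ) (u : ℤ) : BDStep (l ++ [u, 1]) (l ++ [u - 1])

/-- A zero continued fraction: a chain that blows down to `[1,1]`. -/
def IsZCF (L : List ℤ) : Prop :=
  Relation.ReflTransGen BDStep L [1, 1]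

/-- `AdmitsZCF L lam` : one can decrease some entries of `L` by positive integers
with total sum `lam + 1` so that the result is a zero continued fraction. -/
def AdmitsZCF (L : List ℤ) (lam : ℤ) : Prop :=
  ∃ K : List ℤ, K.length = L.length ∧ (∀ i : ℕ, K.getD i 0 ≤ L.getD i 0) ∧
    L.sum - K.sum = lam + 1 ∧ IsZCF K

lemma BDStep.length_eq {K K' : List ℤ} (h : BDStep K K') : K.length = K'.length + 1 := by
  cases h <;> simp; omega

lemma BDStep.sum_le {K K' : List ℤ} (h : BDStep K K') : K.sum ≤ K'.sum + 3 := by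
  cases h <;> simp <;> omega

lemma IsZCF.sum_le {K : List ℤ} (h : IsZCF K) : K.sum ≤ 3 * K.length - 4 := by
  induction h using Relation.ReflTransGen.head_induction_on with
  | refl => simp
  | head hstep _ ih => have := hstep.length_eq; have := hstep.sum_le; omega

lemma AdmitsZCF.sum_le {L : List ℤ} {lam : ℤ} (h : AdmitsZCF L lam) :
    L.sum ≤ 3 * L.length + lam - 3 := by
  obtain ⟨K, hlen, -, hsum, hK⟩ := h
  have := hK.sum_le
  omega

-- `hjVal [] = 0` and `0⁻¹ = 0` make this hold for `L = []` as well.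
lemma hjVal_cons (x : ℤ) (L : List ℤ) : hjVal (x :: L) = x - (hjVal L)⁻¹ := by
  cases L <;> simp [hjVal]

lemma one_lt_hjVal_cons {x : ℤ} {L : List ℤ} (h : ∀ e ∈ x :: L, 2 ≤ e) : 1 < hjVal (x :: L) := by
  induction L generalizing x with
  | nil =>
    have hx := h x List.mem_cons_self
    show (1 : ℚ) < x
    exact_mod_cast (by omega : 1 < x)
  | cons y L ih =>
    have hy := inv_lt_one_of_one_lt₀ (ih (fun e he => h e (List.mem_cons_of_mem x he)))
    have hx : (2 : ℚ) ≤ x := by exact_mod_cast h x (by simp)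
    rw [hjVal_cons]
    linarith

lemma inv_hjVal_mem_Ico {L : List ℤ} (h : ∀ e ∈ L, 2 ≤ e) : (hjVal L)⁻¹ ∈ Set.Ico 0 1 := by
  cases L with
  | nil => simp [hjVal]
  | cons x L =>
    have := one_lt_hjVal_cons h
    exact ⟨by positivity, inv_lt_one_of_one_lt₀ this⟩

lemma ceil_hjVal_cons {x : ℤ} {L : List ℤ} (h : ∀ e ∈ x :: L, 2 ≤ e) : ⌈hjVal (x :: L)⌉ = x := by
  have := inv_hjVal_mem_Ico (fun e he => h e (List.mem_cons_of_mem x he))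
  rw [hjVal_cons, Int.ceil_eq_iff]
  constructor <;> linarith [this.1, this.2]

lemma hjVal_injective {L M : List ℤ} (hL : ∀ e ∈ L, 2 ≤ e) (hM : ∀ e ∈ M, 2 ≤ e)
    (h : hjVal L = hjVal M) : L = M := by
  induction L generalizing M with
  | nil =>
    cases M with
    | nil => rfl
    | cons y M => exact absurd h ((one_lt_hjVal_cons hM).trans' zero_lt_one).ne
  | cons x L ih =>
    cases M with
    | nil => exact absurd h ((one_lt_hjVal_cons hL).trans' zero_lt_one).ne'
    | cons y M =>
      have hxy : x = y := by rw [← ceil_hjVal_cons hL, ← ceil_hjVal_cons hM, h]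
      subst hxy
      rw [hjVal_cons, hjVal_cons, sub_right_inj, inv_inj] at h
      rw [ih (fun e he => hL e (List.mem_cons_of_mem x he))
        (fun e he => hM e (List.mem_cons_of_mem x he)) h]

def hjMat (e : ℤ) : Matrix (Fin 2) (Fin 2) ℤ := !![e, -1; 1, 0]

-- For `L = [e₁,…,e_r]`, `hjMatrix L = !![p, -p'; q, -q']` where `p/q = [e₁,…,e_r]` and
-- `p'/q' = [e₁,…,e_{r-1}]`.
def hjMatrix (L : List ℤ) : Matrix (Fin 2) (Fin 2) ℤ := (L.map hjMat).prod

@[simp] lemma hjMatrix_nil : hjMatrix [] = 1 := rfl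

@[simp] lemma hjMatrix_cons (x : ℤ) (L : List ℤ) : hjMatrix (x :: L) = hjMat x * hjMatrix L := by
  simp [hjMatrix]

@[simp] lemma hjMatrix_append (L M : List ℤ) : hjMatrix (L ++ M) = hjMatrix L * hjMatrix M := by
  simp [hjMatrix]

@[simp] lemma hjMat_mul_apply_zero (x : ℤ) (P : Matrix (Fin 2) (Fin 2) ℤ) (j : Fin 2) :
    (hjMat x * P) 0 j = x * P 0 j - P 1 j := by
  simp [hjMat, Matrix.mul_apply]; ring

@[simp] lemma hjMat_mul_apply_one (x : ℤ) (P : Matrix (Fin 2) (Fin 2) ℤ) (j : Fin 2) :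
    (hjMat x * P) 1 j = P 0 j := by
  simp [hjMat, Matrix.mul_apply]

lemma hjMatrix_apply_one_zero_mem_Ico {L : List ℤ} (h : ∀ e ∈ L, 2 ≤ e) :
    hjMatrix L 1 0 ∈ Set.Ico 0 (hjMatrix L 0 0) := by
  induction L with
  | nil => simp
  | cons x L ih =>
    have hx := h x List.mem_cons_self
    obtain ⟨hq, hp⟩ := ih (fun e he => h e (List.mem_cons_of_mem x he))
    simp only [hjMatrix_cons, hjMat_mul_apply_zero, hjMat_mul_apply_one, Set.mem_Ico]
    constructor <;> nlinarith

lemma hjVal_eq_div {L : List ℤ} (h : ∀ e ∈ L, 2 ≤ e) :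
    hjVal L = (hjMatrix L 0 0 : ℚ) / hjMatrix L 1 0 := by
  induction L with
  | nil => simp [hjVal]
  | cons x L ih =>
    have hL : ∀ e ∈ L, 2 ≤ e := fun e he => h e (List.mem_cons_of_mem x he)
    have hp : (hjMatrix L 0 0 : ℚ) ≠ 0 := by
      obtain ⟨hq, hpq⟩ := hjMatrix_apply_one_zero_mem_Ico hL
      exact_mod_cast (by omega : hjMatrix L 0 0 ≠ 0)
    rw [hjVal_cons, ih hL, hjMatrix_cons, hjMat_mul_apply_zero, hjMat_mul_apply_one, inv_div]
    push_cast
    field_simp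

-- `[e₁,…,e_{r-1}]` of the Wahl chain of `(n, a)` is `(n(n-a)-1)/(a(n-a)-1)`.
def wahlMatrix (n a : ℤ) : Matrix (Fin 2) (Fin 2) ℤ :=
  !![n ^ 2, 1 - n * (n - a); n * a - 1, 1 - a * (n - a)]

lemma shear_mul_hjMat (x : ℤ) : !![1, 1; 0, 1] * hjMat x = hjMat (x + 1) := by
  ext i j; fin_cases i <;> fin_cases j <;> simp [hjMat, Matrix.mul_apply]

lemma hjMat_mul_shear (x : ℤ) : hjMat x * !![1, 0; -1, 1] = hjMat (x + 1) := by
  ext i j; fin_cases i <;> fin_cases j <;> simp [hjMat, Matrix.mul_apply]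

lemma shear_mul_wahlMatrix_mul_hjMat_two (n a : ℤ) :
    !![1, 1; 0, 1] * wahlMatrix (n - a) a * hjMat 2 = wahlMatrix n a := by
  ext i j
  fin_cases i <;> fin_cases j <;>
    simp [wahlMatrix, hjMat, Matrix.mul_apply, -mul_eq_mul_left_iff] <;> ring

lemma hjMat_two_mul_wahlMatrix_mul_shear (n a : ℤ) :
    hjMat 2 * wahlMatrix a (2 * a - n) * !![1, 0; -1, 1] = wahlMatrix n a := by
  ext i j
  fin_cases i <;> fin_cases j <;>
    simp [wahlMatrix, hjMat, Matrix.mul_apply, -mul_eq_mul_left_iff] <;> ring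

lemma exists_hjMatrix_eq_wahlMatrix_of_sub {n a : ℤ} {W : List ℤ} (hW : ∀ e ∈ W, 2 ≤ e)
    (hWmat : hjMatrix W = wahlMatrix (n - a) a) (hWsum : W.sum = 3 * W.length + 1) :
    ∃ V : List ℤ, (∀ e ∈ V, 2 ≤ e) ∧ hjMatrix V = wahlMatrix n a ∧
      V.sum = 3 * V.length + 1 := by
  rcases W with _ | ⟨x, W⟩
  · simp at hWsum
  refine ⟨(x + 1) :: W ++ [2], ?_, ?_, ?_⟩
  · have hx := hW x List.mem_cons_self
    exact List.forall_mem_append.2 ⟨List.forall_mem_cons.2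
      ⟨by omega, fun e he => hW e (List.mem_cons_of_mem x he)⟩, by simp⟩
  · rw [← shear_mul_wahlMatrix_mul_hjMat_two n a, ← hWmat]
    simp [← shear_mul_hjMat, Matrix.mul_assoc]
  · simp only [List.cons_append, List.sum_cons, List.sum_append, List.sum_nil,
      List.length_cons, List.length_append, List.length_nil] at hWsum ⊢
    omega

lemma exists_hjMatrix_eq_wahlMatrix_of_two_mul_sub {n a : ℤ} {W : List ℤ} (hW : ∀ e ∈ W, 2 ≤ e)
    (hWmat : hjMatrix W = wahlMatrix a (2 * a - n)) (hWsum : W.sum = 3 * W.length + 1) :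
    ∃ V : List ℤ, (∀ e ∈ V, 2 ≤ e) ∧ hjMatrix V = wahlMatrix n a ∧
      V.sum = 3 * V.length + 1 := by
  rcases W.eq_nil_or_concat' with rfl | ⟨W, y, rfl⟩
  · simp at hWsum
  refine ⟨2 :: W ++ [y + 1], ?_, ?_, ?_⟩
  · have hy := hW y (by simp)
    exact List.forall_mem_append.2 ⟨List.forall_mem_cons.2
      ⟨le_rfl, fun e he => hW e (by simp [he])⟩, by simp; omega⟩
  · rw [← hjMat_two_mul_wahlMatrix_mul_shear n a, ← hWmat]
    simp [← hjMat_mul_shear, Matrix.mul_assoc]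
  · simp only [List.cons_append, List.sum_cons, List.sum_append, List.sum_nil,
      List.length_cons, List.length_append, List.length_nil] at hWsum ⊢
    omega

theorem exists_hjMatrix_eq_wahlMatrix (n a : ℤ) (ha : 0 < a) (han : a < n) (hna : IsCoprime n a) :
    ∃ W : List ℤ, (∀ e ∈ W, 2 ≤ e) ∧ hjMatrix W = wahlMatrix n a ∧
      W.sum = 3 * W.length + 1 := by
  obtain ⟨u, v, huv⟩ := hna
  rcases lt_trichotomy (2 * a) n with h | h | h
  · obtain ⟨W, hW, hWmat, hWsum⟩ := exists_hjMatrix_eq_wahlMatrix (n - a) a ha (by omega)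
      ⟨u, v + u, by linear_combination huv⟩
    exact exists_hjMatrix_eq_wahlMatrix_of_sub hW hWmat hWsum
  · obtain rfl : a = 1 :=
      Int.eq_one_of_dvd_one ha.le ⟨2 * u + v, by rw [← h] at huv; linear_combination -huv⟩
    obtain rfl : n = 2 := by omega
    refine ⟨[4], by simp, ?_, by simp⟩
    ext i j; fin_cases i <;> fin_cases j <;> simp [wahlMatrix, hjMat]
  · obtain ⟨W, hW, hWmat, hWsum⟩ :=
      exists_hjMatrix_eq_wahlMatrix a (2 * a - n) (by omega) (by omega)
        ⟨v + 2 * u, -u, by linear_combination huv⟩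
    exact exists_hjMatrix_eq_wahlMatrix_of_two_mul_sub hW hWmat hWsum
termination_by n.toNat

theorem IsWahlChain.sum_eq {n a : ℤ} {L : List ℤ} (h : IsWahlChain n a L) :
    L.sum = 3 * L.length + 1 := by
  obtain ⟨ha, han, hna, hL, hval⟩ := h
  obtain ⟨W, hW, hWmat, hWsum⟩ :=
    exists_hjMatrix_eq_wahlMatrix n a ha han (Int.isCoprime_iff_gcd_eq_one.mpr hna)
  suffices L = W by rwa [this]
  refine hjVal_injective hL hW ?_
  rw [hval, hjVal_eq_div hW, hWmat]
  simp [wahlMatrix]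

/-- For a del Pezzo Wahl chain of degree ≥ 5 (i.e. weight ≤ 4):
in type (II) the central mark is ≥ 5; in type (I), if the marking data is not
`[0, 2̲]`, the central mark (the first or last entry) is ≥ 3. -/
theorem stmt7 (n a : ℤ) (L : List ℤ) (h : IsWahlChain n a L) :
    (∀ lam₁ lam₂ : ℤ, ∀ i : ℕ, 1 ≤ i → i + 1 < L.length →
        0 ≤ lam₁ → 0 ≤ lam₂ → lam₁ + lam₂ ≤ 4 →
        AdmitsZCF (L.take i) lam₁ → AdmitsZCF (L.drop (i + 1)) lam₂ →
        5 ≤ L.getD i 0) ∧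
    (∀ lam : ℤ, 0 ≤ lam → lam ≤ 4 →
      (∀ K : List ℤ, K.length = L.dropLast.length →
          (∀ i : ℕ, K.getD i 0 ≤ L.dropLast.getD i 0) →
          L.dropLast.sum - K.sum = lam + 1 → IsZCF K →
          ¬(K = [0] ∧ L.getLast! = 2) → 3 ≤ L.getLast!) ∧
      (∀ K : List ℤ, K.length = L.tail.length →
          (∀ i : ℕ, K.getD i 0 ≤ L.tail.getD i 0) →
          L.tail.sum - K.sum = lam + 1 → IsZCF K →
          ¬(K = [0] ∧ L.headI = 2) → 3 ≤ L.headI)) := by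
  have hsum := h.sum_eq
  refine ⟨fun lam₁ lam₂ i _ hi _ _ hlam hleft hright => ?_, fun lam _ hlam =>
    ⟨fun K hlen hle hK hZ _ => ?_, fun K hlen hle hK hZ _ => ?_⟩⟩
  · have hleft := hleft.sum_le
    have hright := hright.sum_le
    have hsplit : L.sum = (L.take i).sum + L[i] + (L.drop (i + 1)).sum := by
      rw [← L.sum_take_add_sum_drop i, List.drop_eq_getElem_cons (by omega), List.sum_cons,
        add_assoc]
    simp only [List.length_take, List.length_drop] at hleft hright
    rw [List.getD_eq_getElem _ _ (by omega)]
    omega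
  · have := AdmitsZCF.sum_le ⟨K, hlen, hle, hK, hZ⟩
    rcases L.eq_nil_or_concat' with rfl | ⟨L, y, rfl⟩
    · simp at hsum
    simp only [List.dropLast_concat, List.getLast!_eq_getLast?_getD, List.getLast?_concat,
      Option.getD_some, List.sum_append, List.sum_singleton, List.length_append,
      List.length_singleton] at hsum this ⊢
    omega
  · have := AdmitsZCF.sum_le ⟨K, hlen, hle, hK, hZ⟩
    rcases L with _ | ⟨x, L⟩
    · simp at hsum
    simp only [List.tail_cons, List.headI_cons, List.sum_cons, List.length_cons] at hsum this ⊢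
    omega
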